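/- For 1 ≤ k ≤ n, the subgroup of k-decomposable braids in the pure braid group P_n (those q ∈ P_n with φ_S(q) = 1 for every subset S ⊆ N of cardinality k) is generated by the set of monic commutators x whose support σ(x) has cardinality at least n − k + 1. -/

import Mathlib

/-!
Common setup: the pure braid group `P_n` as a presented group, the subgroups
`P_S` and `Q_S`, the characterization of the homomorphisms `φ_S`, the support
`σ(x)`, and monic commutators.
-/

/-- The free-group generator corresponding to the pure braid generator
`p_{a,b}` for `a < b` (indices in `Fin n`, so strand `i+1` of `{1,…,n}`
corresponds to `i : Fin n`). -/
def pf {n : ℕ} (a b : Fin n) (h : a < b) :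
    FreeGroup {q : Fin n × Fin n // q.1 < q.2} :=
  FreeGroup.of ⟨(a, b), h⟩

/-- The defining relations (A), (B), (C) of the pure braid group `P_n`,
each written in the form `lhs⁻¹ * rhs` for an equation `lhs = rhs`. -/
def braidRels (n : ℕ) : Set (FreeGroup {q : Fin n × Fin n // q.1 < q.2}) :=
  -- (A) first equality: p_{a,b} p_{a,c} p_{b,c} = p_{a,c} p_{b,c} p_{a,b}
  {r | ∃ (a b c : Fin n) (hab : a < b) (hbc : b < c),
      r = (pf a b hab * pf a c (hab.trans hbc) * pf b c hbc)⁻¹ *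
          (pf a c (hab.trans hbc) * pf b c hbc * pf a b hab)} ∪
  -- (A) second equality: p_{a,b} p_{a,c} p_{b,c} = p_{b,c} p_{a,b} p_{a,c}
  {r | ∃ (a b c : Fin n) (hab : a < b) (hbc : b < c),
      r = (pf a b hab * pf a c (hab.trans hbc) * pf b c hbc)⁻¹ *
          (pf b c hbc * pf a b hab * pf a c (hab.trans hbc))} ∪
  -- (B) first: p_{a,b} p_{c,d} = p_{c,d} p_{a,b}
  {r | ∃ (a b c d : Fin n) (hab : a < b) (hbc : b < c) (hcd : c < d),
      r = (pf a b hab * pf c d hcd)⁻¹ * (pf c d hcd * pf a b hab)} ∪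
  -- (B) second: p_{a,d} p_{b,c} = p_{b,c} p_{a,d}
  {r | ∃ (a b c d : Fin n) (hab : a < b) (hbc : b < c) (hcd : c < d),
      r = (pf a d (hab.trans (hbc.trans hcd)) * pf b c hbc)⁻¹ *
          (pf b c hbc * pf a d (hab.trans (hbc.trans hcd)))} ∪
  -- (C): p_{a,c} (p_{b,c}⁻¹ p_{b,d} p_{b,c}) = (p_{b,c}⁻¹ p_{b,d} p_{b,c}) p_{a,c}
  {r | ∃ (a b c d : Fin n) (hab : a < b) (hbc : b < c) (hcd : c < d),
      r = (pf a c (hab.trans hbc) * ((pf b c hbc)⁻¹ * pf b d (hbc.trans hcd) * pf b c hbc))⁻¹ *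
          ((pf b c hbc)⁻¹ * pf b d (hbc.trans hcd) * pf b c hbc * pf a c (hab.trans hbc))}

/-- The pure braid group `P_n`, given by the presentation above. -/
abbrev PB (n : ℕ) := PresentedGroup (braidRels n)

/-- The generator `p_{a,b}` of the pure braid group, for `a < b`. -/
def p {n : ℕ} (a b : Fin n) (h : a < b) : PB n := PresentedGroup.of ⟨(a, b), h⟩

/-- `P_S`: the subgroup of `P_n` generated by all `p_{a,b}` with `a ∈ S` and `b ∈ S`. -/
def PS {n : ℕ} (S : Set (Fin n)) : Subgroup (PB n) :=
  Subgroup.closure {x | ∃ (a b : Fin n) (h : a < b), a ∈ S ∧ b ∈ S ∧ x = p a b h}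

/-- `Q_S`: the subgroup of `P_n` generated by all `p_{a,b}` with `a ∈ S` or `b ∈ S`. -/
def QS {n : ℕ} (S : Set (Fin n)) : Subgroup (PB n) :=
  Subgroup.closure {x | ∃ (a b : Fin n) (h : a < b), (a ∈ S ∨ b ∈ S) ∧ x = p a b h}

/-- `IsPhi S φ` says that `φ : P_n → P_n` is the homomorphism `φ_S`, i.e. it sends
`p_{a,b}` to itself if `a ∉ S` and `b ∉ S`, and to `1` otherwise. -/
def IsPhi {n : ℕ} (S : Set (Fin n)) (φ : PB n →* PB n) : Prop :=
  ∀ (a b : Fin n) (h : a < b),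
    (a ∉ S ∧ b ∉ S → φ (p a b h) = p a b h) ∧ ((a ∈ S ∨ b ∈ S) → φ (p a b h) = 1)

/-- The support `σ(x)` of `x ∈ P_n`: the intersection of all `S` with `x ∈ P_S`. -/
def support {n : ℕ} (x : PB n) : Set (Fin n) := ⋂₀ {S | x ∈ PS S}

/-- Monic commutators: the smallest set of elements of `P_n` containing all
`p_{a,b}` and `p_{a,b}⁻¹` and closed under taking nontrivial commutators
`[x,y] = x⁻¹ y⁻¹ x y`. -/
inductive IsMonic {n : ℕ} : PB n → Prop
  | of (a b : Fin n) (h : a < b) : IsMonic (p a b h)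
  | inv (a b : Fin n) (h : a < b) : IsMonic (p a b h)⁻¹
  | comm (x y : PB n) : IsMonic x → IsMonic y → x⁻¹ * y⁻¹ * x * y ≠ 1 →
      IsMonic (x⁻¹ * y⁻¹ * x * y)

/-!
Write `H_d` for the subgroup generated by the monic commutators with at least `d` strands in
their support. A monic commutator `x` is sent by `φ_S` to `x` if `σ(x)` misses `S` and to `1`
otherwise, so `H_{n-k+1}` consists of `k`-decomposable braids.

Conversely, let `q ∈ H_d` be `(n-d)`-decomposable; we show `q ∈ H_{d+1}`, and the theorem
follows by induction on `d`. Modulo `H_{d+1}` the monic commutators with support of size `d`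
commute as soon as their supports differ, because their commutator is trivial or monic with a
larger support. Hence the image of `q` is a product of factors `q_T`, one for each `d`-set `T`,
with `q_T` generated by monic commutators of support `T`. Now `φ_{N∖T}` fixes `q_T`, kills the
other factors and kills `q`, so every `q_T` is trivial.

That `φ_{N∖T}` fixes the generators of `q_T` rests on `σ(p_{a,b}) = {a, b}`, which is detected by
exponent sums: all defining relations are balanced.
-/

namespace Subgroup

variable {G : Type*} [Group G]

theorem commute_of_mem_closure {s t : Set G} (h : ∀ x ∈ s, ∀ y ∈ t, Commute x y) {x y : G}
    (hx : x ∈ closure s) (hy : y ∈ closure t) : Commute x y := by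
  have hst : closure s ≤ centralizer (closure t) := by
    rw [centralizer_closure, closure_le]
    exact fun x hx => mem_centralizer_iff.2 fun y hy => (h x hx y hy).eq.symm
  exact (mem_centralizer_iff.1 (hst hx) y hy).symm

theorem eq_one_of_mem_iSup_of_forall_map_eq_one {ι : Type*} [Finite ι]
    {H : ι → Subgroup G} (hcomm : Pairwise fun i j => ∀ x y, x ∈ H i → y ∈ H j → Commute x y)
    (π : ι → G →* G) (hfix : ∀ i, ∀ x ∈ H i, π i x = x)
    (hkill : ∀ i j, i ≠ j → ∀ x ∈ H j, π i x = 1)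
    {z : G} (hz : z ∈ ⨆ i, H i) (hπz : ∀ i, π i z = 1) : z = 1 := by
  have := Fintype.ofFinite ι
  classical
  rw [← noncommPiCoprod_range (hcomm := hcomm)] at hz
  obtain ⟨f, rfl⟩ := hz
  have hproj (i : ι) : (π i).comp (noncommPiCoprod hcomm) =
      (H i).subtype.comp (Pi.evalMonoidHom (fun j => H j) i) := by
    refine MonoidHom.pi_ext fun j y => ?_
    obtain rfl | hij := eq_or_ne i j
    · simp [hfix i y y.2]
    · simp [hkill i j hij y y.2, Pi.mulSingle_eq_of_ne (M := fun j => H j) hij y]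
  have hf : f = 1 := funext fun i => Subtype.ext <| by
    simpa using (DFunLike.congr_fun (hproj i) f).symm.trans (hπz i)
  simp [hf]

end Subgroup

section

open Subgroup

variable {n : ℕ} {S T : Set (Fin n)} {φ : PB n →* PB n} {x y : PB n}

theorem of_eq_p (j : {q : Fin n × Fin n // q.1 < q.2}) :
    (PresentedGroup.of j : PB n) = p j.1.1 j.1.2 j.2 := rfl

section Relations

variable {a b c d : Fin n}

theorem relation_A₁ (hab : a < b) (hbc : b < c) :
    p a b hab * p a c (hab.trans hbc) * p b c hbc
      = p a c (hab.trans hbc) * p b c hbc * p a b hab :=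
  PresentedGroup.mk_eq_mk_of_inv_mul_mem (.inl <| .inl <| .inl <| .inl ⟨a, b, c, hab, hbc, rfl⟩)

theorem relation_A₂ (hab : a < b) (hbc : b < c) :
    p a b hab * p a c (hab.trans hbc) * p b c hbc
      = p b c hbc * p a b hab * p a c (hab.trans hbc) :=
  PresentedGroup.mk_eq_mk_of_inv_mul_mem (.inl <| .inl <| .inl <| .inr ⟨a, b, c, hab, hbc, rfl⟩)

theorem relation_B₁ (hab : a < b) (hbc : b < c) (hcd : c < d) :
    p a b hab * p c d hcd = p c d hcd * p a b hab :=
  PresentedGroup.mk_eq_mk_of_inv_mul_mem (.inl <| .inl <| .inr ⟨a, b, c, d, hab, hbc, hcd, rfl⟩)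

theorem relation_B₂ (hab : a < b) (hbc : b < c) (hcd : c < d) :
    p a d (hab.trans (hbc.trans hcd)) * p b c hbc
      = p b c hbc * p a d (hab.trans (hbc.trans hcd)) :=
  PresentedGroup.mk_eq_mk_of_inv_mul_mem (.inl <| .inr ⟨a, b, c, d, hab, hbc, hcd, rfl⟩)

theorem relation_C (hab : a < b) (hbc : b < c) (hcd : c < d) :
    p a c (hab.trans hbc) * ((p b c hbc)⁻¹ * p b d (hbc.trans hcd) * p b c hbc)
      = (p b c hbc)⁻¹ * p b d (hbc.trans hcd) * p b c hbc * p a c (hab.trans hbc) :=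
  PresentedGroup.mk_eq_mk_of_inv_mul_mem (.inr ⟨a, b, c, d, hab, hbc, hcd, rfl⟩)

end Relations

theorem lift_eq_one_of_mem_braidRels_of_commGroup {A : Type*} [CommGroup A]
    (f : {q : Fin n × Fin n // q.1 < q.2} → A) :
    ∀ r ∈ braidRels n, FreeGroup.lift f r = 1 := by
  rintro r ((((⟨a, b, c, hab, hbc, rfl⟩ | ⟨a, b, c, hab, hbc, rfl⟩) |
    ⟨a, b, c, d, hab, hbc, hcd, rfl⟩) | ⟨a, b, c, d, hab, hbc, hcd, rfl⟩) |
    ⟨a, b, c, d, hab, hbc, hcd, rfl⟩) <;>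
  · simp only [pf, map_mul, map_inv, FreeGroup.lift_apply_of]
    rw [inv_mul_eq_one]
    ac_rfl

def exponentSum (j : {q : Fin n × Fin n // q.1 < q.2}) : PB n →* Multiplicative ℤ :=
  PresentedGroup.toGroup
    (lift_eq_one_of_mem_braidRels_of_commGroup (Pi.mulSingle j (Multiplicative.ofAdd 1)))

theorem exponentSum_p (j : {q : Fin n × Fin n // q.1 < q.2}) {a b : Fin n} (h : a < b) :
    exponentSum j (p a b h) =
      (Pi.mulSingle j (Multiplicative.ofAdd 1) : _ → Multiplicative ℤ) ⟨(a, b), h⟩ :=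
  PresentedGroup.toGroup.of _

theorem mem_of_p_mem_PS {a b : Fin n} {h : a < b} (hp : p a b h ∈ PS T) :
    a ∈ T ∧ b ∈ T := by
  by_contra hab
  have hle : PS T ≤ (exponentSum ⟨(a, b), h⟩).ker := by
    refine (closure_le _).2 ?_
    rintro - ⟨c, d, hcd, hc, hd, rfl⟩
    have hne : (⟨(c, d), hcd⟩ : {q : Fin n × Fin n // q.1 < q.2}) ≠ ⟨(a, b), h⟩ := by
      rintro ⟨⟩
      exact hab ⟨hc, hd⟩
    simp [exponentSum_p, hne]
  have hexp := MonoidHom.mem_ker.1 (hle hp)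
  simp [exponentSum_p] at hexp


open Classical in
noncomputable def phiGen (S : Set (Fin n)) (j : {q : Fin n × Fin n // q.1 < q.2}) : PB n :=
  if j.1.1 ∈ S ∨ j.1.2 ∈ S then 1 else PresentedGroup.of j

theorem lift_phiGen_eq_one (S : Set (Fin n)) :
    ∀ r ∈ braidRels n, FreeGroup.lift (phiGen S) r = 1 := by
  rintro r ((((⟨a, b, c, hab, hbc, rfl⟩ | ⟨a, b, c, hab, hbc, rfl⟩) |
    ⟨a, b, c, d, hab, hbc, hcd, rfl⟩) | ⟨a, b, c, d, hab, hbc, hcd, rfl⟩) |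
    ⟨a, b, c, d, hab, hbc, hcd, rfl⟩) <;>
  · simp only [pf, map_mul, map_inv, FreeGroup.lift_apply_of, phiGen]
    split_ifs <;>
      first
        | tauto
        | (rw [inv_mul_eq_one]
           first
             | exact relation_A₁ hab hbc
             | exact relation_A₂ hab hbc
             | exact relation_B₁ hab hbc hcd
             | exact relation_B₂ hab hbc hcd
             | exact relation_C hab hbc hcd)
        | group

noncomputable def phi (S : Set (Fin n)) : PB n →* PB n :=
  PresentedGroup.toGroup (lift_phiGen_eq_one S)

theorem isPhi_phi (S : Set (Fin n)) : IsPhi S (phi S) := by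
  intro a b h
  have hphi : phi S (p a b h) = phiGen S ⟨(a, b), h⟩ := PresentedGroup.toGroup.of _
  refine ⟨fun hab => ?_, fun hab => ?_⟩ <;> rw [hphi, phiGen]
  · exact if_neg (not_or.2 hab)
  · exact if_pos hab

theorem IsPhi.comp_eq_of_subset {S' : Set (Fin n)} {ψ : PB n →* PB n} (hφ : IsPhi S φ)
    (hψ : IsPhi S' ψ) (hS : S' ⊆ S) : φ.comp ψ = φ := by
  refine PresentedGroup.ext fun ⟨(a, b), h⟩ => ?_
  rw [MonoidHom.comp_apply, of_eq_p]
  by_cases hab : a ∈ S' ∨ b ∈ S'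
  · rw [(hψ a b h).2 hab, map_one, (hφ a b h).2 (hab.imp (@hS a) (@hS b))]
  · rw [(hψ a b h).1 (not_or.1 hab)]

def IsDecomposable (k : ℕ) (q : PB n) : Prop :=
  ∀ S : Set (Fin n), S.ncard = k → ∀ φ : PB n →* PB n, IsPhi S φ → φ q = 1

theorem IsDecomposable.mono {k k' : ℕ} {q : PB n} (hq : IsDecomposable k q) (hk : k ≤ k') :
    IsDecomposable k' q := by
  intro S hS φ hφ
  obtain ⟨S', hS'S, hS'⟩ := Set.exists_subset_card_eq (hS ▸ hk : k ≤ S.ncard)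
  rw [← IsPhi.comp_eq_of_subset hφ (isPhi_phi S') hS'S, MonoidHom.comp_apply,
    hq S' hS' _ (isPhi_phi S'), map_one]


theorem IsPhi.range_le (hφ : IsPhi S φ) : φ.range ≤ PS Sᶜ := by
  rw [MonoidHom.range_eq_map, ← PresentedGroup.closure_range_of, MonoidHom.map_closure,
    closure_le]
  rintro - ⟨-, ⟨⟨⟨a, b⟩, h⟩, rfl⟩, rfl⟩
  rw [SetLike.mem_coe, of_eq_p]
  by_cases hab : a ∈ S ∨ b ∈ S
  · rw [(hφ a b h).2 hab]
    exact one_mem _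
  · rw [(hφ a b h).1 (not_or.1 hab)]
    exact subset_closure ⟨a, b, h, (not_or.1 hab).1, (not_or.1 hab).2, rfl⟩

theorem IsPhi.map_eq_self_of_mem (hφ : IsPhi S φ) (hST : Disjoint S T) (hx : x ∈ PS T) :
    φ x = x := by
  refine (closure_le (MonoidHom.eqLocus φ (MonoidHom.id _))).2 ?_ hx
  rintro - ⟨a, b, h, ha, hb, rfl⟩
  exact (hφ a b h).1 ⟨hST.notMem_of_mem_right ha, hST.notMem_of_mem_right hb⟩

theorem support_subset_of_mem (hx : x ∈ PS T) : support x ⊆ T :=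
  Set.sInter_subset_of_mem hx

theorem IsPhi.support_subset_of_map_eq_self (hφ : IsPhi S φ) (hx : φ x = x) :
    support x ⊆ Sᶜ :=
  support_subset_of_mem (IsPhi.range_le hφ ⟨x, hx⟩)

theorem support_p {a b : Fin n} (h : a < b) : support (p a b h) = {a, b} := by
  refine (support_subset_of_mem (subset_closure ⟨a, b, h, by simp, by simp, rfl⟩)).antisymm ?_
  rintro z hz
  refine Set.mem_sInter.2 fun T hT => ?_
  obtain ⟨ha, hb⟩ := mem_of_p_mem_PS hT
  rcases hz with rfl | rfl
  exacts [ha, hb]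

theorem support_inv (x : PB n) : support x⁻¹ = support x := by
  simp only [support, inv_mem_iff]

theorem IsMonic.map_eq_self_or_eq_one (hx : IsMonic x) (hφ : IsPhi S φ) :
    φ x = x ∨ φ x = 1 := by
  induction hx with
  | of a b h | inv a b h =>
    by_cases hab : a ∈ S ∨ b ∈ S
    · simp [(hφ a b h).2 hab]
    · simp [(hφ a b h).1 (not_or.1 hab)]
  | comm x y _ _ _ ihx ihy =>
    rcases ihx with hx | hx <;> rcases ihy with hy | hy <;> simp [hx, hy]

theorem IsMonic.support_subset_commutator (hx : IsMonic x) (hy : IsMonic y)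
    (hne : x⁻¹ * y⁻¹ * x * y ≠ 1) :
    support x ∪ support y ⊆ support (x⁻¹ * y⁻¹ * x * y) := by
  refine Set.subset_sInter fun T hT => ?_
  have hφ := isPhi_phi Tᶜ
  have hfix := IsPhi.map_eq_self_of_mem hφ disjoint_compl_left hT
  have hxy : phi Tᶜ x = x ∧ phi Tᶜ y = y := by
    rcases hx.map_eq_self_or_eq_one hφ with hx1 | hx1 <;>
      rcases hy.map_eq_self_or_eq_one hφ with hy1 | hy1
    · exact ⟨hx1, hy1⟩
    all_goals exact absurd (by simpa [hx1, hy1] using hfix.symm) hne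
  simpa using Set.union_subset (IsPhi.support_subset_of_map_eq_self hφ hxy.1)
    (IsPhi.support_subset_of_map_eq_self hφ hxy.2)

theorem IsMonic.map_eq_self (hx : IsMonic x) (hφ : IsPhi S φ) (hxS : Disjoint (support x) S) :
    φ x = x := by
  induction hx with
  | of a b h =>
    rw [support_p] at hxS
    exact (hφ a b h).1 ⟨hxS.notMem_of_mem_left (by simp), hxS.notMem_of_mem_left (by simp)⟩
  | inv a b h =>
    rw [support_inv, support_p] at hxS
    rw [map_inv,
      (hφ a b h).1 ⟨hxS.notMem_of_mem_left (by simp), hxS.notMem_of_mem_left (by simp)⟩]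
  | comm x y hx hy hne ihx ihy =>
    have hsub := hx.support_subset_commutator hy hne
    rw [map_mul, map_mul, map_mul, map_inv, map_inv,
      ihx (hxS.mono_left (Set.subset_union_left.trans hsub)),
      ihy (hxS.mono_left (Set.subset_union_right.trans hsub))]

theorem IsMonic.map_eq_one (hx : IsMonic x) (hφ : IsPhi S φ) (hxS : ¬support x ⊆ Sᶜ) :
    φ x = 1 :=
  (hx.map_eq_self_or_eq_one hφ).resolve_left
    fun h => hxS (IsPhi.support_subset_of_map_eq_self hφ h)


def monicSpan (n d : ℕ) : Subgroup (PB n) :=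
  closure {x : PB n | IsMonic x ∧ d ≤ (support x).ncard}

theorem monicSpan_zero : monicSpan n 0 = ⊤ := by
  rw [eq_top_iff, ← PresentedGroup.closure_range_of, closure_le]
  rintro - ⟨⟨⟨a, b⟩, h⟩, rfl⟩
  exact subset_closure ⟨.of a b h, Nat.zero_le _⟩

theorem IsMonic.conj_mem_monicSpan {g : PB n} (hg : IsMonic g) {d : ℕ}
    (hx : x ∈ monicSpan n d) : g⁻¹ * x * g ∈ monicSpan n d := by
  refine closure_induction (fun y ⟨hy, hyd⟩ => ?_) (by simp)
    (fun y z _ _ hy hz => by simpa [mul_assoc] using mul_mem hy hz)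
    (fun y _ hy => by simpa [mul_assoc] using inv_mem hy) hx
  have hconj : g⁻¹ * y * g = y * (y⁻¹ * g⁻¹ * y * g) := by group
  rw [hconj]
  by_cases hyg : y⁻¹ * g⁻¹ * y * g = 1
  · rw [hyg, mul_one]
    exact subset_closure ⟨hy, hyd⟩
  · refine mul_mem (subset_closure ⟨hy, hyd⟩) (subset_closure ⟨.comm y g hy hg hyg, ?_⟩)
    exact hyd.trans (Set.ncard_le_ncard
      (Set.subset_union_left.trans (hy.support_subset_commutator hg hyg)))

instance monicSpan_normal (n d : ℕ) : (monicSpan n d).Normal := by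
  rw [← normalizer_eq_top_iff, eq_top_iff, ← PresentedGroup.closure_range_of, closure_le]
  rintro - ⟨⟨⟨a, b⟩, h⟩, rfl⟩ x
  rw [of_eq_p]
  refine ⟨fun hx => ?_, fun hx => ?_⟩
  · simpa using (IsMonic.inv a b h).conj_mem_monicSpan hx
  · simpa [mul_assoc] using (IsMonic.of a b h).conj_mem_monicSpan hx

theorem IsPhi.monicSpan_le_comap (hφ : IsPhi S φ) (d : ℕ) :
    monicSpan n d ≤ (monicSpan n d).comap φ := by
  refine (closure_le _).2 fun y ⟨hy, hyd⟩ => ?_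
  rcases hy.map_eq_self_or_eq_one hφ with hφy | hφy
  · rw [SetLike.mem_coe, mem_comap, hφy]
    exact subset_closure ⟨hy, hyd⟩
  · simp [hφy]

theorem IsPhi.monicSpan_le_ker (hφ : IsPhi S φ) {d : ℕ} (hd : Sᶜ.ncard < d) :
    monicSpan n d ≤ φ.ker :=
  (closure_le _).2 fun _ ⟨hy, hyd⟩ =>
    hy.map_eq_one hφ fun hsub => (hd.trans_le hyd).not_ge (Set.ncard_le_ncard hsub)

theorem IsMonic.commute_mk (hx : IsMonic x) (hy : IsMonic y) {d : ℕ}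
    (hxd : (support x).ncard = d) (hyd : (support y).ncard = d) (hxy : support x ≠ support y) :
    Commute (x : PB n ⧸ monicSpan n (d + 1)) y := by
  have hmem : x⁻¹ * y⁻¹ * x * y ∈ monicSpan n (d + 1) := by
    by_cases hxy1 : x⁻¹ * y⁻¹ * x * y = 1
    · rw [hxy1]
      exact one_mem _
    have hlt : (support x).ncard < (support x ∪ support y).ncard := by
      refine Set.ncard_lt_ncard <| Set.ssubset_iff_subset_ne.2 ⟨Set.subset_union_left, fun h => ?_⟩
      exact hxy (Set.eq_of_subset_of_ncard_le (h ▸ Set.subset_union_right) (by omega)).symm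
    exact subset_closure ⟨.comm x y hx hy hxy1,
      (hxd ▸ hlt).trans_le (Set.ncard_le_ncard (hx.support_subset_commutator hy hxy1))⟩
  rw [← Commute.inv_inv_iff, ← commutatorElement_eq_one_iff_commute, commutatorElement_def,
    inv_inv, inv_inv]
  exact (QuotientGroup.eq_one_iff _).2 hmem

theorem mem_monicSpan_succ {d : ℕ} {q : PB n} (hq : q ∈ monicSpan n d)
    (hdec : IsDecomposable (n - d) q) : q ∈ monicSpan n (d + 1) := by
  let N := monicSpan n (d + 1)
  let H (T : {T : Set (Fin n) // T.ncard = d}) : Subgroup (PB n ⧸ N) :=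
    closure ((QuotientGroup.mk : PB n → PB n ⧸ N) '' {x | IsMonic x ∧ support x = T})
  let π (T : {T : Set (Fin n) // T.ncard = d}) : PB n ⧸ N →* PB n ⧸ N :=
    QuotientGroup.map N N (phi (T : Set (Fin n))ᶜ) (IsPhi.monicSpan_le_comap (isPhi_phi _) _)
  rw [← QuotientGroup.eq_one_iff]
  refine eq_one_of_mem_iSup_of_forall_map_eq_one (H := H) ?commute π ?fix ?kill ?mem ?proj
  case commute =>
    intro T T' hTT' u v hu hv
    refine commute_of_mem_closure ?_ hu hv
    rintro - ⟨x, ⟨hx, hxT⟩, rfl⟩ - ⟨y, ⟨hy, hyT⟩, rfl⟩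
    exact hx.commute_mk hy (hxT ▸ T.2) (hyT ▸ T'.2) (hxT ▸ hyT ▸ Subtype.coe_ne_coe.2 hTT')
  case fix =>
    intro T u hu
    refine (closure_le (MonoidHom.eqLocus (π T) (MonoidHom.id _))).2 ?_ hu
    rintro - ⟨x, ⟨hx, hxT⟩, rfl⟩
    exact congrArg _ (hx.map_eq_self (isPhi_phi _) (hxT ▸ disjoint_compl_right))
  case kill =>
    intro T T' hTT' u hu
    refine (closure_le (π T).ker).2 ?_ hu
    rintro - ⟨x, ⟨hx, hxT'⟩, rfl⟩
    refine (QuotientGroup.eq_one_iff _).2 ?_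
    rw [hx.map_eq_one (isPhi_phi _) ?_]
    · exact one_mem _
    rw [compl_compl, hxT']
    exact fun hsub =>
      hTT' (Subtype.ext (Set.eq_of_subset_of_ncard_le hsub (by rw [T.2, T'.2]))).symm
  case mem =>
    refine ((closure_le ((⨆ T, H T).comap (QuotientGroup.mk' N))).2 ?_) hq
    rintro x ⟨hx, hxd⟩
    rw [SetLike.mem_coe, mem_comap, QuotientGroup.mk'_apply]
    rcases hxd.eq_or_lt with hxd | hxd
    · exact mem_iSup_of_mem ⟨support x, hxd.symm⟩ (subset_closure ⟨x, ⟨hx, rfl⟩, rfl⟩)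
    · have hxN : x ∈ N := subset_closure ⟨hx, hxd⟩
      rw [(QuotientGroup.eq_one_iff x).2 hxN]
      exact one_mem _
  case proj =>
    intro T
    refine congrArg _ (hdec _ ?_ _ (isPhi_phi _))
    rw [Set.ncard_compl, T.2, Nat.card_fin]

theorem mem_monicSpan_of_isDecomposable {q : PB n} (d : ℕ)
    (hq : IsDecomposable (n + 1 - d) q) : q ∈ monicSpan n d := by
  induction d with
  | zero => exact monicSpan_zero ▸ mem_top q
  | succ d ih =>
    rw [Nat.add_sub_add_right] at hq
    exact mem_monicSpan_succ (ih (hq.mono (by omega))) hq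

theorem IsDecomposable.of_mem_monicSpan {k : ℕ} {q : PB n}
    (hq : q ∈ monicSpan n (n - k + 1)) : IsDecomposable k q := fun S hS _ hφ =>
  IsPhi.monicSpan_le_ker hφ (by rw [Set.ncard_compl, hS, Nat.card_fin]; omega) hq

end

theorem k_decomposable_general (n k : ℕ) (hkn : k ≤ n) (q : PB n) :
    q ∈ Subgroup.closure
        {x : PB n | IsMonic x ∧ n - k + 1 ≤ (support x).ncard} ↔
      ∀ S : Set (Fin n), S.ncard = k →
        ∀ φ : PB n →* PB n, IsPhi S φ → φ q = 1 :=
  ⟨IsDecomposable.of_mem_monicSpan,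
    fun hq => mem_monicSpan_of_isDecomposable _ (by rwa [show n + 1 - (n - k + 1) = k by omega])⟩

/-- Corollary 2.2: the subgroup of `k`-decomposable braids is
generated by the monic commutators whose support has cardinality at least
`n - k + 1`. -/
theorem k_decomposable (n k : ℕ) (hk : 1 ≤ k) (hkn : k ≤ n) (q : PB n) :
    q ∈ Subgroup.closure
        {x : PB n | IsMonic x ∧ n - k + 1 ≤ (support x).ncard} ↔
      ∀ S : Set (Fin n), S.ncard = k →
        ∀ φ : PB n →* PB n, IsPhi S φ → φ q = 1 :=
  k_decomposable_general n k hkn q
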